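/- arXiv:2502.18833 — 7 statements merged into one kernel-verified Lean document; each statement's English description precedes it below -/
import Mathlib

section
/- Let L be the poset defined as follows. Let E = ℕ × (ℕ ∪ {∞}), and for each i ∈ ℕ let C_i = {i} × ℕ. Let F = ∏_{i∈ℕ} C_i, and L = E ∪ (F × {0,1}) with order generated by: (i,m) ≤ (i,n) ≤ (i,∞) whenever m ≤ n in ℕ; and for each φ ∈ F and i ∈ ℕ, φ(i) ≤ (φ,0) ≤ (φ,1). Then L is a dcpo. -/
/-- A subset is Scott open: an upper set inaccessible by directed suprema. -/
def ScottOpen {α : Type*} [Preorder α] (U : Set α) : Prop :=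
  IsUpperSet U ∧ ∀ d : Set α, d.Nonempty → DirectedOn (· ≤ ·) d →
    ∀ a : α, IsLUB d a → a ∈ U → (d ∩ U).Nonempty

/-- A subset is Scott closed: a lower set closed under directed suprema. -/
def ScottClosed {α : Type*} [Preorder α] (C : Set α) : Prop :=
  IsLowerSet C ∧ ∀ d : Set α, d ⊆ C → d.Nonempty → DirectedOn (· ≤ ·) d →
    ∀ a : α, IsLUB d a → a ∈ C

/-- A dcpo: every nonempty directed subset has a supremum. -/
def IsDcpo (α : Type*) [Preorder α] : Prop :=
  ∀ d : Set α, d.Nonempty → DirectedOn (· ≤ ·) d → ∃ a, IsLUB d a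

/-- The way-below relation. -/
def WayBelow {α : Type*} [Preorder α] (x y : α) : Prop :=
  ∀ d : Set α, d.Nonempty → DirectedOn (· ≤ ·) d → ∀ a : α, IsLUB d a → y ≤ a →
    ∃ z ∈ d, x ≤ z

/-- A compact element: one that is way-below itself. -/
def IsCompactElt {α : Type*} [Preorder α] (x : α) : Prop := WayBelow x x

/-- A continuous dcpo (domain). -/
def IsContinuousDcpo (α : Type*) [Preorder α] : Prop :=
  IsDcpo α ∧ ∀ x : α, DirectedOn (· ≤ ·) {y | WayBelow y x} ∧ IsLUB {y | WayBelow y x} x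

/-- An algebraic dcpo (algebraic domain). -/
def IsAlgebraicDcpo (α : Type*) [Preorder α] : Prop :=
  IsDcpo α ∧ ∀ x : α, DirectedOn (· ≤ ·) {k | IsCompactElt k ∧ k ≤ x} ∧
    IsLUB {k | IsCompactElt k ∧ k ≤ x} x

/-- An ideal domain: a continuous dcpo in which every element is compact or maximal. -/
def IsIdealDomain (α : Type*) [Preorder α] : Prop :=
  IsContinuousDcpo α ∧ ∀ x : α, IsCompactElt x ∨ IsMax x

/-- The Scott topology on a preorder. -/
def scottTop (α : Type*) [Preorder α] : TopologicalSpace α where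
  IsOpen := ScottOpen
  isOpen_univ := ⟨isUpperSet_univ, fun d hd _ _ _ _ => hd.imp fun x hx => ⟨hx, trivial⟩⟩
  isOpen_inter U V hU hV := by
    refine ⟨hU.1.inter hV.1, fun d hne hdir a ha haUV => ?_⟩
    obtain ⟨u, hud, huU⟩ := hU.2 d hne hdir a ha haUV.1
    obtain ⟨v, hvd, hvV⟩ := hV.2 d hne hdir a ha haUV.2
    obtain ⟨w, hwd, hw1, hw2⟩ := hdir u hud v hvd
    exact ⟨w, hwd, hU.1 hw1 huU, hV.1 hw2 hvV⟩
  isOpen_sUnion S hS := by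
    constructor
    · rintro a b hab ⟨U, hUS, haU⟩
      exact ⟨U, hUS, (hS U hUS).1 hab haU⟩
    · rintro d hne hdir a ha ⟨U, hUS, haU⟩
      obtain ⟨u, hud, huU⟩ := (hS U hUS).2 d hne hdir a ha haU
      exact ⟨u, hud, U, hUS, huU⟩

/-- The maximal point space of a preorder. -/
abbrev MaxSpace (α : Type*) [Preorder α] := {x : α // IsMax x}

/-- The maximal point space carries the relative Scott topology. -/
instance maxSpaceTop (α : Type*) [Preorder α] : TopologicalSpace (MaxSpace α) :=
  TopologicalSpace.induced Subtype.val (scottTop α)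
/-- The carrier of the poset `L`: `E = ℕ × (ℕ ∪ {∞})` together with `F × {0,1}`,
where an element `φ` of `F = ∏ᵢ Cᵢ` (with `Cᵢ = {i} × ℕ`) is encoded by the function
`ℕ → ℕ` of its second coordinates, i.e. `φ(i) = (i, φ i)`, and `{0,1}` by `Bool`. -/
structure LCarrier where
  toSum : (ℕ × ℕ∞) ⊕ ((ℕ → ℕ) × Bool)

/-- The order on `L` generated by `(i,m) ≤ (i,n) ≤ (i,∞)` for `m ≤ n` in `ℕ`,
and `φ(i) ≤ (φ,0) ≤ (φ,1)` for all `φ ∈ F`, `i ∈ ℕ`. -/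
def lle : LCarrier → LCarrier → Prop
  | ⟨.inl (i, m)⟩, ⟨.inl (j, n)⟩ => i = j ∧ m ≤ n
  | ⟨.inl (i, m)⟩, ⟨.inr (φ, _)⟩ => m ≤ (φ i : ℕ∞)
  | ⟨.inr (φ, b)⟩, ⟨.inr (ψ, c)⟩ => φ = ψ ∧ b ≤ c
  | ⟨.inr _⟩, ⟨.inl _⟩ => False

instance : PartialOrder LCarrier where
  le := lle
  lt a b := lle a b ∧ ¬ lle b a
  lt_iff_le_not_ge _ _ := Iff.rfl
  le_refl x := by rcases x with ⟨⟨i, m⟩ | ⟨φ, b⟩⟩ <;> exact ⟨rfl, le_refl _⟩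
  le_trans x y z h1 h2 := by
    rcases x with ⟨⟨i, m⟩ | ⟨φ, b⟩⟩ <;> rcases y with ⟨⟨j, n⟩ | ⟨ψ, c⟩⟩ <;>
      rcases z with ⟨⟨k, p⟩ | ⟨χ, d⟩⟩ <;>
      simp only [lle] at h1 h2 ⊢
    · exact ⟨h1.1.trans h2.1, h1.2.trans h2.2⟩
    · cases h1.1; exact h1.2.trans h2
    · cases h2.1; exact h1
    · exact ⟨h1.1.trans h2.1, h1.2.trans h2.2⟩
  le_antisymm x y h1 h2 := by
    rcases x with ⟨⟨i, m⟩ | ⟨φ, b⟩⟩ <;> rcases y with ⟨⟨j, n⟩ | ⟨ψ, c⟩⟩ <;>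
      simp only [lle] at h1 h2
    · cases h1.1
      exact congrArg _ (congrArg _ (Prod.ext rfl (le_antisymm h1.2 h2.2)))
    · cases h1.1
      exact congrArg _ (congrArg _ (Prod.ext rfl (le_antisymm h1.2 h2.2)))

/-!
A directed set meeting `F × {0,1}` contains some `(φ, b)`, above which `L` has at most two
elements; so the directed set has a greatest element. A directed set inside `E` lies in a single
column `{i} × (ℕ ∪ {∞})`, and its supremum is `(i, s)` where `s` is the supremum in `ℕ∞` of the
heights; `(i, s)` is also below every `(φ, c)` above the set, as that only asks `s ≤ φ i`.
-/

theorem DirectedOn.exists_isGreatest_of_finite_Ici {α : Type*} [Preorder α] {d : Set α}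
    (hd : DirectedOn (· ≤ ·) d) {x : α} (hx : x ∈ d) (hfin : (Set.Ici x).Finite) :
    ∃ g, IsGreatest d g := by
  obtain ⟨g, ⟨hgd, hxg⟩, hgmax⟩ :=
    (hfin.subset Set.inter_subset_right).exists_maximal (⟨x, hx, le_rfl⟩ : (d ∩ Set.Ici x).Nonempty)
  refine ⟨g, hgd, fun y hy => ?_⟩
  obtain ⟨w, hwd, hyw, hgw⟩ := hd y hy g hgd
  exact hyw.trans (hgmax ⟨hwd, hxg.trans hgw⟩ hgw)

namespace LCarrier

variable {i j : ℕ} {m n : ℕ∞} {φ ψ : ℕ → ℕ} {b c : Bool}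

theorem inl_le_inl : (⟨.inl (i, m)⟩ : LCarrier) ≤ ⟨.inl (j, n)⟩ ↔ i = j ∧ m ≤ n := Iff.rfl

theorem inl_le_inr : (⟨.inl (i, m)⟩ : LCarrier) ≤ ⟨.inr (φ, b)⟩ ↔ m ≤ φ i := Iff.rfl

theorem inr_le_inr : (⟨.inr (φ, b)⟩ : LCarrier) ≤ ⟨.inr (ψ, c)⟩ ↔ φ = ψ ∧ b ≤ c := Iff.rfl

theorem not_inr_le_inl : ¬ (⟨.inr (φ, b)⟩ : LCarrier) ≤ ⟨.inl (i, m)⟩ := id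

theorem finite_Ici_inr (φ : ℕ → ℕ) (b : Bool) : (Set.Ici (⟨.inr (φ, b)⟩ : LCarrier)).Finite := by
  refine (Set.toFinite {⟨.inr (φ, false)⟩, ⟨.inr (φ, true)⟩}).subset ?_
  rintro ⟨⟨i, m⟩ | ⟨ψ, c⟩⟩ h
  · exact (not_inr_le_inl (Set.mem_Ici.mp h)).elim
  · obtain ⟨rfl, -⟩ := inr_le_inr.mp (Set.mem_Ici.mp h)
    cases c <;> simp

def column (i : ℕ) (m : ℕ∞) : LCarrier := ⟨.inl (i, m)⟩

theorem isLUB_image_column (i : ℕ) {S : Set ℕ∞} (hS : S.Nonempty) :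
    IsLUB (column i '' S) (column i (sSup S)) := by
  refine ⟨Set.forall_mem_image.mpr fun m hm => inl_le_inl.mpr ⟨rfl, le_sSup hm⟩, fun a ha => ?_⟩
  have hub : ∀ m ∈ S, column i m ≤ a := Set.forall_mem_image.mp ha
  rcases a with ⟨⟨j, n⟩ | ⟨ψ, c⟩⟩
  · obtain ⟨m, hm⟩ := hS
    obtain ⟨rfl, -⟩ := inl_le_inl.mp (hub m hm)
    exact inl_le_inl.mpr ⟨rfl, sSup_le fun m hm => (inl_le_inl.mp (hub m hm)).2⟩
  · exact inl_le_inr.mpr (sSup_le fun m hm => inl_le_inr.mp (hub m hm))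

theorem subset_range_column {d : Set LCarrier} (hd : DirectedOn (· ≤ ·) d)
    (hE : ∀ φ b, (⟨.inr (φ, b)⟩ : LCarrier) ∉ d) (hx : column i m ∈ d) :
    d ⊆ Set.range (column i) := by
  rintro ⟨⟨j, n⟩ | ⟨φ, b⟩⟩ hy
  · obtain ⟨⟨⟨k, p⟩ | ⟨ψ, c⟩⟩, hzd, hyz, hxz⟩ := hd _ hy _ hx
    · obtain ⟨rfl, -⟩ := inl_le_inl.mp hyz
      obtain ⟨rfl, -⟩ := inl_le_inl.mp hxz
      exact ⟨n, rfl⟩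
    · exact (hE ψ c hzd).elim
  · exact (hE φ b hy).elim

end LCarrier

open LCarrier in
/-- The poset `L` is a dcpo: every nonempty directed subset has a supremum. -/
theorem L_isDcpo : IsDcpo LCarrier := by
  rintro d ⟨x, hx⟩ hd
  by_cases hF : ∃ φ b, (⟨.inr (φ, b)⟩ : LCarrier) ∈ d
  · obtain ⟨φ, b, hφb⟩ := hF
    obtain ⟨g, hg⟩ := hd.exists_isGreatest_of_finite_Ici hφb (finite_Ici_inr φ b)
    exact ⟨g, hg.isLUB⟩
  · push Not at hF
    rcases x with ⟨⟨i, m⟩ | ⟨φ, b⟩⟩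
    · rw [← Set.image_preimage_eq_of_subset (subset_range_column hd hF (m := m) hx)]
      exact ⟨_, isLUB_image_column i ⟨m, hx⟩⟩
    · exact (hF φ b hx).elim
end

section
/- Let L be the poset from the construction: E = ℕ × (ℕ ∪ {∞}), C_i = {i} × ℕ, F = ∏_{i∈ℕ} C_i, L = E ∪ (F × {0,1}) with order generated by (i,m) ≤ (i,n) ≤ (i,∞) for m ≤ n, and φ(i) ≤ (φ,0) ≤ (φ,1). Then the set Max(L) of maximal elements of L is not a G_δ-set in the Scott topology on L: there is no countable family (U_n) of Scott-open subsets of L with Max(L) = ⋂_n U_n. -/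
/-!
Each `(i, ∞)` is maximal and is the supremum of the chain `(i, 0) ≤ (i, 1) ≤ ⋯`, so the `i`-th
Scott-open set `Uᵢ` of a would-be `G_δ` presentation of `Max(L)` already contains some `(i, φ i)`.
The resulting `φ ∈ F` gives `(φ, 0)`, which lies above every `φ(i)`, hence in every `Uᵢ`; but
`(φ, 0) < (φ, 1)` is not maximal.
-/

lemma ScottOpen.exists_mem_of_isLUB_range {α : Type*} [Preorder α] {U : Set α}
    (hU : ScottOpen U) {f : ℕ → α} (hf : Monotone f) {a : α} (ha : IsLUB (Set.range f) a)
    (haU : a ∈ U) : ∃ m, f m ∈ U := by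
  obtain ⟨_, ⟨m, rfl⟩, hm⟩ :=
    hU.2 _ (Set.range_nonempty f) (directedOn_range.2 hf.directed_le) a ha haU
  exact ⟨m, hm⟩

namespace LCarrier

abbrev ofE (i : ℕ) (m : ℕ∞) : LCarrier := ⟨.inl (i, m)⟩

abbrev ofF (φ : ℕ → ℕ) (b : Bool) : LCarrier := ⟨.inr (φ, b)⟩

lemma monotone_ofE_natCast (i : ℕ) : Monotone fun m : ℕ => ofE i m :=
  fun _ _ h => ⟨rfl, Nat.cast_le.2 h⟩

lemma ofE_le_ofF (φ : ℕ → ℕ) (i : ℕ) (b : Bool) : ofE i (φ i) ≤ ofF φ b :=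
  le_refl (φ i : ℕ∞)

lemma isLUB_range_ofE_natCast (i : ℕ) : IsLUB (Set.range fun m : ℕ => ofE i m) (ofE i ⊤) := by
  refine ⟨?_, ?_⟩
  · rintro _ ⟨m, rfl⟩
    exact ⟨rfl, le_top⟩
  · rintro ⟨⟨j, p⟩ | ⟨φ, c⟩⟩ hb
    · have hbound (m : ℕ) : i = j ∧ (m : ℕ∞) ≤ p := hb ⟨m, rfl⟩
      exact ⟨(hbound 0).1, ENat.forall_natCast_le_iff_le.1 fun m _ => (hbound m).2⟩
    · have hsucc : ((φ i + 1 : ℕ) : ℕ∞) ≤ φ i := hb ⟨φ i + 1, rfl⟩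
      exact absurd (Nat.cast_le.1 hsucc) (Nat.not_succ_le_self _)

lemma isMax_ofE_top (i : ℕ) : IsMax (ofE i ⊤) := by
  rintro ⟨⟨j, p⟩ | ⟨φ, c⟩⟩ h
  · obtain ⟨rfl, hp⟩ : i = j ∧ ⊤ ≤ p := h
    exact ⟨rfl, le_top⟩
  · exact absurd (show (⊤ : ℕ∞) ≤ φ i from h) (ENat.natCast_lt_top _).not_ge

lemma not_isMax_ofF_false (φ : ℕ → ℕ) : ¬ IsMax (ofF φ false) := fun h =>
  absurd (h (show ofF φ false ≤ ofF φ true from ⟨rfl, Bool.false_le true⟩)).2 (by decide)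

end LCarrier

/-- `Max(L)` is not a `G_δ`-set in the Scott topology on `L`: there is no
countable family of Scott-open subsets of `L` whose intersection is `Max(L)`. -/
theorem L_max_not_Gdelta :
    ¬ ∃ U : ℕ → Set LCarrier,
        (∀ n, ScottOpen (U n)) ∧ {x : LCarrier | IsMax x} = ⋂ n, U n := by
  rintro ⟨U, hopen, hmax⟩
  have hmem_iff (x : LCarrier) : IsMax x ↔ ∀ n, x ∈ U n :=
    (Set.ext_iff.1 hmax x).trans Set.mem_iInter
  have hchain (n : ℕ) : ∃ m : ℕ, LCarrier.ofE n m ∈ U n :=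
    (hopen n).exists_mem_of_isLUB_range (LCarrier.monotone_ofE_natCast n)
      (LCarrier.isLUB_range_ofE_natCast n)
      ((hmem_iff _).1 (LCarrier.isMax_ofE_top n) n)
  choose φ hφ using hchain
  exact LCarrier.not_isMax_ofF_false φ <|
    (hmem_iff _).2 fun n => (hopen n).1 (LCarrier.ofE_le_ofF φ n false) (hφ n)
end

section
/- Let L be the poset from the construction above and let L̂ = L \ {(φ,1) : φ ∈ F} with the inherited order. For each k ∈ ℕ define U_k = L̂ \ ⋃{↓(i,k) : i ≤ k}. Then each U_k is Scott open in L̂ and ⋂_{k∈ℕ} U_k = Max(L̂); hence Max(L̂) is a G_δ-set in the Scott topology on L̂. -/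
/-- The poset `L̂ = L \ {(φ,1) : φ ∈ F}` with the inherited order. -/
abbrev LHat := {x : LCarrier // ∀ φ : ℕ → ℕ, x ≠ ⟨Sum.inr (φ, true)⟩}

/-- The element `(i,k)` of `L̂` (with `k ∈ ℕ ⊆ ℕ∪{∞}`). -/
def ikElem (i k : ℕ) : LHat :=
  ⟨⟨Sum.inl (i, (k : ℕ∞))⟩, fun φ h => by cases h⟩

/-- `U_k = L̂ \ ⋃ {↓(i,k) : i ≤ k}`. -/
def Uset (k : ℕ) : Set LHat := {x | ∀ i ≤ k, ¬ x ≤ ikElem i k}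

open Set

section Scott

variable {α : Type*} [Preorder α]

theorem scottOpen_compl_Iic (a : α) : ScottOpen (Iic a)ᶜ := by
  refine ⟨(isLowerSet_Iic a).compl, fun d _ _ b hb hba => ?_⟩
  by_contra hd
  refine hba (hb.2 fun x hx => ?_)
  by_contra hxa
  exact hd ⟨x, hx, hxa⟩

theorem Set.Finite.scottOpen_biInter {ι : Type*} {s : Set ι} (hs : s.Finite) {U : ι → Set α}
    (hU : ∀ i ∈ s, ScottOpen (U i)) : ScottOpen (⋂ i ∈ s, U i) :=
  letI := scottTop α
  hs.isOpen_biInter (f := U) hU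

end Scott

def iTopElem (i : ℕ) : LHat :=
  ⟨⟨Sum.inl (i, ⊤)⟩, fun _ h => by cases h⟩

theorem ikElem_le_ikElem {i m n : ℕ} (h : m ≤ n) : ikElem i m ≤ ikElem i n :=
  ⟨rfl, by exact_mod_cast h⟩

theorem ikElem_lt_iTopElem (i k : ℕ) : ikElem i k < iTopElem i :=
  lt_of_le_not_ge ⟨rfl, le_top⟩ fun h => ENat.natCast_ne_top k (top_le_iff.mp h.2)

theorem not_isMax_ikElem (i k : ℕ) : ¬IsMax (ikElem i k) :=
  not_isMax_of_lt (ikElem_lt_iTopElem i k)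

theorem isMax_iTopElem (i : ℕ) : IsMax (iTopElem i) := by
  rintro ⟨⟨⟨j, n⟩ | ⟨ψ, c⟩⟩, _⟩ ⟨rfl, -⟩
  exact ⟨rfl, le_top⟩

def phiZeroElem (φ : ℕ → ℕ) : LHat :=
  ⟨⟨Sum.inr (φ, false)⟩, fun _ h => by cases h⟩

theorem isMax_phiZeroElem (φ : ℕ → ℕ) : IsMax (phiZeroElem φ) := by
  rintro ⟨⟨⟨j, n⟩ | ⟨ψ, _ | _⟩⟩, hy⟩ ⟨rfl, -⟩
  · exact le_rfl
  · exact absurd rfl (hy φ)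

theorem isMax_or_exists_eq_ikElem (x : LHat) : IsMax x ∨ ∃ i k, x = ikElem i k := by
  rcases x with ⟨⟨⟨i, _ | k⟩ | ⟨φ, _ | _⟩⟩, hx⟩
  · exact .inl (isMax_iTopElem i)
  · exact .inr ⟨i, k, rfl⟩
  · exact .inl (isMax_phiZeroElem φ)
  · exact absurd rfl (hx φ)

theorem Uset_eq_biInter (k : ℕ) : Uset k = ⋂ i ∈ Iic k, (Iic (ikElem i k))ᶜ := by
  ext
  simp [Uset]

theorem scottOpen_Uset (k : ℕ) : ScottOpen (Uset k) :=
  Uset_eq_biInter k ▸ (finite_Iic k).scottOpen_biInter fun _ _ => scottOpen_compl_Iic _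

theorem iInter_Uset : ⋂ k, Uset k = {x | IsMax x} := by
  ext x
  simp only [mem_iInter, mem_ofPred_eq]
  refine ⟨fun hx => ?_, fun hx k i _ hle => not_isMax_ikElem i k (hx.mono hle)⟩
  rcases isMax_or_exists_eq_ikElem x with hmax | ⟨i, n, rfl⟩
  · exact hmax
  · exact absurd (ikElem_le_ikElem (le_max_right i n)) (hx (max i n) i (le_max_left i n))

/-- Each `U_k` is Scott open in `L̂`, `⋂ₖ U_k = Max(L̂)`, and hence
`Max(L̂)` is a `G_δ`-set in the Scott topology on `L̂`. -/
theorem LHat_max_Gdelta :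
    (∀ k : ℕ, ScottOpen (Uset k)) ∧
    (⋂ k : ℕ, Uset k) = {x : LHat | IsMax x} ∧
    ∃ V : ℕ → Set LHat, (∀ n, ScottOpen (V n)) ∧ (⋂ n, V n) = {x : LHat | IsMax x} :=
  ⟨scottOpen_Uset, iInter_Uset, Uset, scottOpen_Uset, iInter_Uset⟩
end

section
/- Let P be an ideal domain and let X ⊆ Max(P) be closed in the maximal point space (i.e., X = C ∩ Max(P) for some Scott-closed C ⊆ P). Then ↓X is a Scott-closed subset of P. -/
theorem WayBelow.mem_of_isLUB {α : Type*} [Preorder α] {L d : Set α} {w a : α}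
    (hw : WayBelow w a) (hL : IsLowerSet L) (hdL : d ⊆ L) (hne : d.Nonempty)
    (hdir : DirectedOn (· ≤ ·) d) (ha : IsLUB d a) : w ∈ L := by
  obtain ⟨z, hzd, hwz⟩ := hw d hne hdir a ha le_rfl
  exact hL hwz (hdL hzd)

theorem ScottClosed.mem_of_wayBelow_subset {α : Type*} [Preorder α] {C : Set α} {a : α}
    (hC : ScottClosed C) (hdir : DirectedOn (· ≤ ·) {w | WayBelow w a})
    (ha : IsLUB {w | WayBelow w a} a) (hCne : C.Nonempty) (hsub : {w | WayBelow w a} ⊆ C) :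
    a ∈ C := by
  rcases Set.eq_empty_or_nonempty {w | WayBelow w a} with hempty | hne
  · obtain ⟨c, hc⟩ := hCne
    rw [hempty, isLUB_empty_iff] at ha
    exact hC.1 (ha c) hc
  · exact hC.2 _ hsub hne hdir a ha

/-- If `P` is an ideal domain and `X ⊆ Max(P)` is closed in the maximal point
space (`X = C ∩ Max(P)` for a Scott-closed `C`), then `↓X` is Scott closed in `P`. -/
theorem downclosure_scottClosed {P : Type*} [PartialOrder P]
    (hP : IsIdealDomain P) (C : Set P) (hC : ScottClosed C) :
    ScottClosed {y : P | ∃ x ∈ C ∩ {m : P | IsMax m}, y ≤ x} := by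
  obtain ⟨⟨-, hcont⟩, hcompact_or_max⟩ := hP
  have hlower : IsLowerSet {y : P | ∃ x ∈ C ∩ {m : P | IsMax m}, y ≤ x} :=
    (lowerClosure (C ∩ {m : P | IsMax m})).lower
  refine ⟨hlower, fun d hd hne hdir a ha => ?_⟩
  rcases hcompact_or_max a with hcompact | hmax
  · exact WayBelow.mem_of_isLUB hcompact hlower hd hne hdir ha
  · have hdC : d ⊆ C := fun y hy => by
      obtain ⟨x, hx, hyx⟩ := hd hy
      exact hC.1 hyx hx.1
    have haC : a ∈ C := hC.mem_of_wayBelow_subset (hcont a).1 (hcont a).2 (hne.mono hdC)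
      fun w hw => hw.mem_of_isLUB hC.1 hdC hne hdir ha
    exact ⟨a, ⟨haC, hmax⟩, le_rfl⟩
end

section
/- Every Scott-closed subset of an ideal domain, with the inherited order, is itself an ideal domain. -/
/-!
Directed sets in a Scott-closed subset `C` of a dcpo `P` have their supremum in `C`, so suprema
of directed sets agree in `C` and in `P`, and way-below in `P` implies way-below in `C`. For
`x ∈ C` the approximants of `x` in `P` lie in `C` (a lower set), so they still approximate `x` in
`C`; and compact or maximal elements of `P` stay compact or maximal in `C`.
-/

section Preorder

variable {α : Type*} [Preorder α] {x y : α}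

theorem WayBelow.le (h : WayBelow x y) : x ≤ y := by
  obtain ⟨z, rfl, hxz⟩ :=
    h {y} (Set.singleton_nonempty y) (directedOn_singleton y) y isLUB_singleton le_rfl
  exact hxz

theorem IsBot.wayBelow (hx : IsBot x) (y : α) : WayBelow x y :=
  fun _ ⟨z, hz⟩ _ _ _ _ => ⟨z, hz, hx z⟩

theorem nonempty_wayBelow_of_isLUB (h : IsLUB {y | WayBelow y x} x) :
    {y | WayBelow y x}.Nonempty := by
  rw [Set.nonempty_iff_ne_empty]
  intro hempty
  have hx : x ∈ {y | WayBelow y x} := (isLUB_empty_iff.mp (hempty ▸ h)).wayBelow x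
  simp [hempty] at hx

theorem directedOn_wayBelow_of_subset {S : Set α} (hSx : S ⊆ {y | WayBelow y x})
    (hne : S.Nonempty) (hdir : DirectedOn (· ≤ ·) S) (hlub : IsLUB S x) :
    DirectedOn (· ≤ ·) {y | WayBelow y x} := by
  intro u hu v hv
  obtain ⟨zu, hzu, huz⟩ := hu S hne hdir x hlub le_rfl
  obtain ⟨zv, hzv, hvz⟩ := hv S hne hdir x hlub le_rfl
  obtain ⟨w, hw, hzuw, hzvw⟩ := hdir zu hzu zv hzv
  exact ⟨w, hSx hw, huz.trans hzuw, hvz.trans hzvw⟩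

theorem isLUB_wayBelow_of_subset {S : Set α} (hSx : S ⊆ {y | WayBelow y x}) (hlub : IsLUB S x) :
    IsLUB {y | WayBelow y x} x :=
  ⟨fun _ hy => WayBelow.le hy, fun _ hc => hlub.2 fun _ hy => hc (hSx hy)⟩

end Preorder

section Subtype

variable {P : Type*} [Preorder P] {C : Set P}

theorem isLUB_of_isLUB_image_val {s : Set C} {b : C}
    (h : IsLUB (Subtype.val '' s) (b : P)) : IsLUB s b :=
  ⟨fun _ hx => h.1 ⟨_, hx, rfl⟩, fun _ hc => h.2 (by rintro _ ⟨_, hx, rfl⟩; exact hc hx)⟩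

namespace ScottClosed

variable (hC : ScottClosed C) (hP : IsDcpo P) {d : Set C}
include hC hP

theorem exists_isLUB_image_val (hne : d.Nonempty) (hdir : DirectedOn (· ≤ ·) d) :
    ∃ a : C, IsLUB (Subtype.val '' d) (a : P) := by
  have hdir' : DirectedOn (· ≤ ·) (Subtype.val '' d) := hdir.mono_comp fun _ _ h => h
  obtain ⟨b, hb⟩ := hP _ (hne.image _) hdir'
  exact ⟨⟨b, hC.2 _ (Subtype.coe_image_subset C d) (hne.image _) hdir' b hb⟩, hb⟩

theorem isDcpo : IsDcpo C := fun _ hne hdir =>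
  (hC.exists_isLUB_image_val hP hne hdir).imp fun _ => isLUB_of_isLUB_image_val

theorem isLUB_image_val (hne : d.Nonempty) (hdir : DirectedOn (· ≤ ·) d) {a : C}
    (ha : IsLUB d a) : IsLUB (Subtype.val '' d) (a : P) := by
  obtain ⟨b, hb⟩ := hC.exists_isLUB_image_val hP hne hdir
  have hab : AntisymmRel (· ≤ ·) (a : P) b :=
    ⟨ha.2 (isLUB_of_isLUB_image_val hb).1, (isLUB_of_isLUB_image_val hb).2 ha.1⟩
  exact (isLUB_congr_of_antisymmRel hab).2 hb

theorem wayBelow_of_wayBelow_val {x y : C} (h : WayBelow (x : P) y) : WayBelow x y := by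
  intro d hne hdir a ha hya
  obtain ⟨_, ⟨z, hz, rfl⟩, hxz⟩ :=
    h _ (hne.image _) (hdir.mono_comp fun _ _ h => h) a (hC.isLUB_image_val hP hne hdir ha) hya
  exact ⟨z, hz, hxz⟩

end ScottClosed

theorem ScottClosed.isContinuousDcpo (hC : ScottClosed C) (hP : IsContinuousDcpo P) :
    IsContinuousDcpo C := by
  refine ⟨hC.isDcpo hP.1, fun x => ?_⟩
  obtain ⟨hdir, hlub⟩ := hP.2 x
  set S : Set C := Subtype.val ⁻¹' {y | WayBelow y (x : P)}
  have hS : Subtype.val '' S = {y | WayBelow y (x : P)} :=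
    Set.image_preimage_eq_of_subset fun y hy => ⟨⟨y, hC.1 hy.le x.2⟩, rfl⟩
  have hSx : S ⊆ {y | WayBelow y x} := fun y hy => hC.wayBelow_of_wayBelow_val hP.1 hy
  have hSlub : IsLUB S x := isLUB_of_isLUB_image_val (hS ▸ hlub)
  have hSne : S.Nonempty := Set.image_nonempty.mp (hS ▸ nonempty_wayBelow_of_isLUB hlub)
  have hSdir : DirectedOn (· ≤ ·) S := (directedOn_image (f := Subtype.val)).mp (hS ▸ hdir)
  exact ⟨directedOn_wayBelow_of_subset hSx hSne hSdir hSlub, isLUB_wayBelow_of_subset hSx hSlub⟩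

end Subtype

/-- Every Scott-closed subset of an ideal domain, with the inherited order,
is itself an ideal domain. -/
theorem scottClosed_idealDomain {P : Type*} [PartialOrder P]
    (hP : IsIdealDomain P) (C : Set P) (hC : ScottClosed C) :
    IsIdealDomain C := by
  refine ⟨hC.isContinuousDcpo hP.1, fun x => ?_⟩
  rcases hP.2 x with hcompact | hmax
  · exact Or.inl (hC.wayBelow_of_wayBelow_val hP.1.1 hcompact)
  · exact Or.inr fun _ hxb => hmax hxb
end

section
/- With Q as above (triples (U,V,k) with U × V ⊆ ↑k ∩ Max(P), ordered by (U₁,V₁,k₁) ⊑ (U₂,V₂,k₂) iff k₁ ≤ k₂ and ↑k₂ ∩ Max(P) ⊆ U₁ × V₁): for each x ∈ X, the set 𝒥(x) = {(U,V,k) ∈ Q : x ∈ U} is an ideal of Q (a directed lower set). -/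
section ProductConstruction

variable {P X Y : Type*} [PartialOrder P] [TopologicalSpace X] [TopologicalSpace Y]

/-- The poset `Q` of triples `(U,V,k)` with `U` a nonempty open subset of `X`, `V` an open
neighborhood of `y₀`, `k` a compact element of `P`, and `U × V ⊆ ↑k ∩ Max(P)` (via the
identification `e : Max(P) ≅ X × Y`). -/
def QSet (e : MaxSpace P ≃ₜ X × Y) (y₀ : Y) : Set (Set X × Set Y × P) :=
  {t | IsOpen t.1 ∧ t.1.Nonempty ∧ IsOpen t.2.1 ∧ y₀ ∈ t.2.1 ∧ IsCompactElt t.2.2 ∧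
    ∀ m : MaxSpace P, (e m).1 ∈ t.1 → (e m).2 ∈ t.2.1 → t.2.2 ≤ m.val}

/-- The relation `⊑` on `Q`: `(U₁,V₁,k₁) ⊑ (U₂,V₂,k₂)` iff `k₁ ≤ k₂` and
`↑k₂ ∩ Max(P) ⊆ U₁ × V₁`. -/
def QRel (e : MaxSpace P ≃ₜ X × Y) (y₀ : Y) (t₁ t₂ : QSet e y₀) : Prop :=
  t₁.val.2.2 ≤ t₂.val.2.2 ∧
    ∀ m : MaxSpace P, t₂.val.2.2 ≤ m.val → (e m).1 ∈ t₁.val.1 ∧ (e m).2 ∈ t₁.val.2.1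

/-- `𝒥(x) = {(U,V,k) ∈ Q : x ∈ U}`. -/
def JSet (e : MaxSpace P ≃ₜ X × Y) (y₀ : Y) (x : X) : Set (QSet e y₀) :=
  {t | x ∈ t.val.1}

end ProductConstruction


/-! Writing `m := e⁻¹(x, y₀)`, a triple `(U, V, k)` lies in `𝒥(x)` exactly when `m ∈ U × V`, so
its `k` is a compact element below `m`. Conversely every compact `k ≤ m` is the last component of
a triple in `𝒥(x)`: `↑k` is Scott open, so `↑k ∩ Max(P)` is a neighbourhood of `(x, y₀)` and
contains a box `U × V` around it. Two triples of `𝒥(x)` have a common upper bound because the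
box `(U₁ ∩ U₂) × (V₁ ∩ V₂)` is a neighbourhood of `m`, hence, by algebraicity, contains
`↑k ∩ Max(P)` for some compact `k ≤ m` that can be taken above `k₁` and `k₂`. -/

theorem IsCompactElt.scottOpen_Ici {P : Type*} [Preorder P] {k : P} (hk : IsCompactElt k) :
    ScottOpen (Set.Ici k) :=
  ⟨fun _ _ hab ha => le_trans ha hab, fun d hne hdir a ha hka => hk d hne hdir a ha hka⟩

namespace IsAlgebraicDcpo

variable {P : Type*} [PartialOrder P] (hP : IsAlgebraicDcpo P)
include hP

theorem exists_compact_le (p : P) : ∃ k, IsCompactElt k ∧ k ≤ p := by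
  rcases Set.eq_empty_or_nonempty {k | IsCompactElt k ∧ k ≤ p} with h | h
  · -- `p` is then the supremum of `∅`, i.e. the bottom element, which is compact.
    have hbot : ∀ q, p ≤ q := fun q => (h ▸ (hP.2 p).2).2 fun _ ha => ha.elim
    exact ⟨p, fun d ⟨z, hz⟩ _ _ _ _ => ⟨z, hz, hbot z⟩, le_rfl⟩
  · exact h

theorem exists_compact_mem_of_scottOpen {O : Set P} (hO : ScottOpen O) {p k₀ : P} (hp : p ∈ O)
    (hk₀ : IsCompactElt k₀) (hk₀p : k₀ ≤ p) :
    ∃ k, IsCompactElt k ∧ k ≤ p ∧ k₀ ≤ k ∧ k ∈ O := by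
  obtain ⟨hdir, hlub⟩ := hP.2 p
  obtain ⟨z, hz, hzO⟩ := hO.2 {k | IsCompactElt k ∧ k ≤ p} ⟨k₀, hk₀, hk₀p⟩ hdir p hlub hp
  obtain ⟨k, hk, hzk, hk₀k⟩ := hdir z hz k₀ ⟨hk₀, hk₀p⟩
  exact ⟨k, hk.1, hk.2, hk₀k, hO.1 hzk hzO⟩

end IsAlgebraicDcpo

section ProductConstruction

variable {P X Y : Type*} [PartialOrder P] [TopologicalSpace X] [TopologicalSpace Y]
  {e : MaxSpace P ≃ₜ X × Y} {y₀ : Y} {x : X}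

theorem le_of_mem_JSet {t : QSet e y₀} (ht : t ∈ JSet e y₀ x) :
    t.val.2.2 ≤ (e.symm (x, y₀)).val :=
  t.2.2.2.2.2.2 _ (by simpa [JSet] using ht) (by simpa using t.2.2.2.2.1)

theorem exists_mem_JSet_of_compact_le {k : P} (hk : IsCompactElt k)
    (hkx : k ≤ (e.symm (x, y₀)).val) : ∃ t ∈ JSet e y₀ x, t.val.2.2 = k := by
  have hupper : IsOpen {m : MaxSpace P | k ≤ m.val} := ⟨_, hk.scottOpen_Ici, rfl⟩
  have hopen : IsOpen (e.symm ⁻¹' {m : MaxSpace P | k ≤ m.val}) :=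
    hupper.preimage e.symm.continuous
  obtain ⟨U, V, hU, hV, hxU, hyV, hUV⟩ := isOpen_prod_iff.mp hopen x y₀ hkx
  refine ⟨⟨(U, V, k), hU, ⟨x, hxU⟩, hV, hyV, hk, fun m h₁ h₂ => ?_⟩, hxU, rfl⟩
  simpa using hUV (show e m ∈ U ×ˢ V from ⟨h₁, h₂⟩)

variable (e y₀ x)

theorem JSet_nonempty (hP : IsAlgebraicDcpo P) : (JSet e y₀ x).Nonempty :=
  let ⟨_, hk, hkx⟩ := hP.exists_compact_le (e.symm (x, y₀)).val
  let ⟨t, ht, _⟩ := exists_mem_JSet_of_compact_le hk hkx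
  ⟨t, ht⟩

theorem JSet_directed (hP : IsAlgebraicDcpo P) {a b : QSet e y₀} (ha : a ∈ JSet e y₀ x)
    (hb : b ∈ JSet e y₀ x) : ∃ c ∈ JSet e y₀ x, QRel e y₀ a c ∧ QRel e y₀ b c := by
  set m := e.symm (x, y₀)
  obtain ⟨k₀, ⟨hk₀, hk₀m⟩, hak₀, hbk₀⟩ :=
    (hP.2 m.val).1 _ ⟨a.2.2.2.2.2.1, le_of_mem_JSet ha⟩ _ ⟨b.2.2.2.2.2.1, le_of_mem_JSet hb⟩
  have hbox : IsOpen (e ⁻¹' ((a.val.1 ∩ b.val.1) ×ˢ (a.val.2.1 ∩ b.val.2.1))) :=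
    ((a.2.1.inter b.2.1).prod (a.2.2.2.1.inter b.2.2.2.1)).preimage e.continuous
  obtain ⟨O, hO, hOeq⟩ : ∃ O, ScottOpen O ∧ Subtype.val ⁻¹' O = _ := hbox
  have hmO : m.val ∈ O := by
    change m ∈ Subtype.val ⁻¹' O
    rw [hOeq]
    simpa [m] using ⟨⟨ha, hb⟩, a.2.2.2.2.1, b.2.2.2.2.1⟩
  obtain ⟨k, hk, hkm, hk₀k, hkO⟩ := hP.exists_compact_mem_of_scottOpen hO hmO hk₀ hk₀m
  obtain ⟨c, hc, rfl⟩ := exists_mem_JSet_of_compact_le hk hkm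
  have hcover : ∀ m' : MaxSpace P, c.val.2.2 ≤ m'.val →
      e m' ∈ (a.val.1 ∩ b.val.1) ×ˢ (a.val.2.1 ∩ b.val.2.1) := fun m' h => by
    rw [← Set.mem_preimage, ← hOeq]
    exact hO.1 h hkO
  exact ⟨c, hc, ⟨hak₀.trans hk₀k, fun m' h => ⟨(hcover m' h).1.1, (hcover m' h).2.1⟩⟩,
    ⟨hbk₀.trans hk₀k, fun m' h => ⟨(hcover m' h).1.2, (hcover m' h).2.2⟩⟩⟩

theorem mem_JSet_of_QRel {a b : QSet e y₀} (hab : QRel e y₀ a b) (hb : b ∈ JSet e y₀ x) :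
    a ∈ JSet e y₀ x := by
  simpa [JSet] using (hab.2 _ (le_of_mem_JSet hb)).1

end ProductConstruction

/-- For each `x ∈ X`, the set `𝒥(x)` is an ideal of `(Q,⊑)`: a nonempty,
`⊑`-directed lower set. -/
theorem JSet_ideal {P X Y : Type*} [PartialOrder P]
    [TopologicalSpace X] [TopologicalSpace Y] (hP : IsAlgebraicDcpo P)
    (e : MaxSpace P ≃ₜ X × Y) (y₀ : Y) (x : X) :
    (JSet e y₀ x).Nonempty ∧
    (∀ a ∈ JSet e y₀ x, ∀ b ∈ JSet e y₀ x,
      ∃ c ∈ JSet e y₀ x, QRel e y₀ a c ∧ QRel e y₀ b c) ∧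
    (∀ a b : QSet e y₀, QRel e y₀ a b → b ∈ JSet e y₀ x → a ∈ JSet e y₀ x) :=
  ⟨JSet_nonempty e y₀ x hP, fun _ ha _ hb => JSet_directed e y₀ x hP ha hb,
    fun _ _ => mem_JSet_of_QRel e y₀ x⟩
end

section
/- Let P be a dcpo in which every element is either compact or maximal. If D is a directed subset of a lower set A ⊆ P that is of the form A = ↓(C ∩ Max(P)) for some Scott-closed set C, then ⋁D ∈ A. -/
theorem IsCompactElt.mem_of_isLUB {α : Type*} [Preorder α] {A D : Set α} {s : α}
    (hs : IsCompactElt s) (hA : IsLowerSet A) (hDA : D ⊆ A) (hne : D.Nonempty)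
    (hdir : DirectedOn (· ≤ ·) D) (hsup : IsLUB D s) : s ∈ A := by
  obtain ⟨d, hd, hsd⟩ := hs D hne hdir s hsup le_rfl
  exact hA hsd (hDA hd)

theorem directed_sup_mem_general {P : Type*} [PartialOrder P]
    (hcm : ∀ x : P, IsCompactElt x ∨ IsMax x)
    (C : Set P) (hC : ScottClosed C)
    (D : Set P) (hD : D ⊆ {y : P | ∃ x ∈ C ∩ {m : P | IsMax m}, y ≤ x})
    (hne : D.Nonempty) (hdir : DirectedOn (· ≤ ·) D) :
    ∀ s : P, IsLUB D s → s ∈ {y : P | ∃ x ∈ C ∩ {m : P | IsMax m}, y ≤ x} := by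
  change D ⊆ lowerClosure (C ∩ {m | IsMax m}) at hD
  intro s hs
  change s ∈ lowerClosure (C ∩ {m | IsMax m})
  rcases hcm s with hcompact | hmax
  · exact hcompact.mem_of_isLUB (lowerClosure _).lower hD hne hdir hs
  · have hDC : D ⊆ C := hD.trans (lowerClosure_min Set.inter_subset_left hC.1)
    exact subset_lowerClosure ⟨hC.2 D hDC hne hdir s hs, hmax⟩

/-- In a dcpo in which every element is compact or maximal, if `D` is a
directed subset of the lower set `A = ↓(C ∩ Max(P))` for a Scott-closed `C`, then
`⋁D ∈ A`. -/
theorem directed_sup_mem {P : Type*} [PartialOrder P]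
    (hdcpo : IsDcpo P) (hcm : ∀ x : P, IsCompactElt x ∨ IsMax x)
    (C : Set P) (hC : ScottClosed C)
    (D : Set P) (hD : D ⊆ {y : P | ∃ x ∈ C ∩ {m : P | IsMax m}, y ≤ x})
    (hne : D.Nonempty) (hdir : DirectedOn (· ≤ ·) D) :
    ∀ s : P, IsLUB D s → s ∈ {y : P | ∃ x ∈ C ∩ {m : P | IsMax m}, y ≤ x} :=
  directed_sup_mem_general hcm C hC D hD hne hdir
end
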